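/- arXiv:1608.01528 — 2 statements merged into one kernel-verified Lean document; each statement's English description precedes it below -/
import Mathlib

section
/- For every causal tripartite correlation P(a,b,c|x,y,z) with binary inputs x,y,z ∈ {0,1} and binary outputs a,b,c ∈ {0,1}, the causal inequality I_4 ≥ 0 holds, where I_4 = 2 − P(0,0,0|0,0,0) − P(0,1,1|1,1,0) − P(1,0,1|0,1,1) − P(1,1,0|1,0,1). -/
/-- A correlation for the parties in the finite set `S`, where party `i` has input set `X i`
and output set `A i`: a real number `P x a` for each assignment of inputs `x` and outputs `a`
for the parties in `S`. -/
def Corr {ι : Type} (X A : ι → Type) (S : Finset ι) : Type :=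
  ((i : {j // j ∈ S}) → X i.1) → ((i : {j // j ∈ S}) → A i.1) → ℝ

/-- `p` is a probability distribution on the finite type `α`. -/
def IsProbDist {α : Type} [Fintype α] (p : α → ℝ) : Prop :=
  (∀ a, 0 ≤ p a) ∧ ∑ a, p a = 1

/-- Restriction of a tuple indexed by `S` to a subset `T ⊆ S`. -/
def restr {ι : Type} {X : ι → Type} {S T : Finset ι} (h : T ⊆ S)
    (x : (i : {j // j ∈ S}) → X i.1) : (i : {j // j ∈ T}) → X i.1 :=
  fun i => x ⟨i.1, h i.2⟩

theorem erase_sub {ι : Type} [DecidableEq ι] (S : Finset ι) (k : ι) : S.erase k ⊆ S :=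
  fun _ hi => Finset.mem_of_mem_erase hi

theorem sdiff_sub {ι : Type} [DecidableEq ι] (S K : Finset ι) : S \ K ⊆ S :=
  fun _ hi => (Finset.mem_sdiff.mp hi).1

/-- Combine a tuple on `K` and a tuple on `S \ K` into a tuple on `S`. -/
def glue {ι : Type} [DecidableEq ι] {X : ι → Type} {S K : Finset ι} (_ : K ⊆ S)
    (u : (i : {j // j ∈ K}) → X i.1) (v : (i : {j // j ∈ S \ K}) → X i.1) :
    (i : {j // j ∈ S}) → X i.1 :=
  fun i => if h : i.1 ∈ K then u ⟨i.1, h⟩ else v ⟨i.1, Finset.mem_sdiff.mpr ⟨i.2, h⟩⟩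

/-- Insert a value for party `k` into a tuple on `S.erase k`, giving a tuple on `S`. -/
def ins {ι : Type} [DecidableEq ι] {X : ι → Type} {S : Finset ι} {k : ι} (_ : k ∈ S)
    (xk : X k) (u : (i : {j // j ∈ S.erase k}) → X i.1) : (i : {j // j ∈ S}) → X i.1 :=
  fun i => if h : i.1 = k then cast (congrArg X h.symm) xk
    else u ⟨i.1, Finset.mem_erase.mpr ⟨h, i.2⟩⟩

/-- Causal correlations, defined by induction on the number of parties: any single-party
probability distribution is causal; a correlation on a set `S` of at least two parties is
causal iff it is a convex combination, over choices of a party `k ∈ S` acting first, of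
products of a single-party distribution for `k` with causal correlations for the remaining
parties `S.erase k` that may depend on the input and output of party `k`. -/
inductive IsCausal {ι : Type} [DecidableEq ι] (X A : ι → Type) [∀ i, Fintype (A i)] :
    (S : Finset ι) → Corr X A S → Prop
  | base (k : ι) (P : Corr X A {k}) (hP : ∀ x, IsProbDist (P x)) : IsCausal X A {k} P
  | step (S : Finset ι) (hS : 2 ≤ S.card) (P : Corr X A S)
      (q : {j // j ∈ S} → ℝ)
      (Pfirst : (k : {j // j ∈ S}) → X k.1 → A k.1 → ℝ)
      (Prest : (k : {j // j ∈ S}) → X k.1 → A k.1 → Corr X A (S.erase k.1))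
      (hq : ∀ k, 0 ≤ q k)
      (hq1 : ∑ k ∈ S.attach, q k = 1)
      (hPfirst : ∀ k xk, IsProbDist (Pfirst k xk))
      (hPrest : ∀ k xk ak, IsCausal X A (S.erase k.1) (Prest k xk ak))
      (hP : ∀ x a, P x a = ∑ k ∈ S.attach, q k * Pfirst k (x k) (a k) *
            Prest k (x k) (a k) (restr (erase_sub S k.1) x) (restr (erase_sub S k.1) a)) :
      IsCausal X A S P

/-- Tripartite correlations with binary inputs and binary outputs for the three parties
`A`, `B`, `C` (encoding input/output `0` as `false` and `1` as `true`). -/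
abbrev Corr3 : Type := Corr (fun _ : Fin 3 => Bool) (fun _ : Fin 3 => Bool) Finset.univ

/-- The triple `(u, v, w)` as an input (or output) assignment for the three parties. -/
def t3 (u v w : Bool) : (i : {j // j ∈ (Finset.univ : Finset (Fin 3))}) → Bool :=
  fun i => ![u, v, w] i.1


/-!
Whichever party `k` acts first, its single-party distribution `P_k(a_k|x_k)` enters the four
terms of `I_4` with four distinct input/output pairs `(x_k, a_k)`. Bounding the remaining
factor by `1`, the contribution of the branch `k` is at most `q_k · Σ_{x_k, a_k} P_k(a_k|x_k)
= 2 q_k`, and summing over `k` gives at most `2`.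
-/

open Finset

lemma IsProbDist.le_one {α : Type} [Fintype α] {p : α → ℝ} (h : IsProbDist p) (a : α) :
    p a ≤ 1 :=
  h.2 ▸ single_le_sum (fun i _ => h.1 i) (mem_univ a)

lemma sum_le_card_of_injective {α β κ : Type} [Fintype α] [Fintype β] [Fintype κ]
    {p : α → β → ℝ} (hp : ∀ u, IsProbDist (p u)) (f : κ → α × β) (hf : Function.Injective f) :
    ∑ j, p (f j).1 (f j).2 ≤ Fintype.card α :=
  calc ∑ j, p (f j).1 (f j).2 = ∑ y ∈ univ.map ⟨f, hf⟩, p y.1 y.2 := by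
        rw [sum_map]; rfl
    _ ≤ ∑ y : α × β, p y.1 y.2 :=
        sum_le_univ_sum_of_nonneg fun y => (hp y.1).1 y.2
    _ = Fintype.card α := by simp [Fintype.sum_prod_type, fun u => (hp u).2]

namespace IsCausal

variable {ι : Type} [DecidableEq ι] {X A : ι → Type} [∀ i, Fintype (A i)]
  {S : Finset ι} {P : Corr X A S}

lemma le_one (h : IsCausal X A S P) (x a) : P x a ≤ 1 := by
  induction h with
  | base _ _ hP => exact (hP x).le_one a
  | step S _ _ q Pf _ hq hq1 hPf _ hPeq ih =>
    rw [hPeq, ← hq1]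
    refine sum_le_sum fun k _ => ?_
    calc _ ≤ q k * Pf k (x k) (a k) :=
          mul_le_of_le_one_right (mul_nonneg (hq k) ((hPf k (x k)).1 (a k))) (ih k _ _ _ _)
      _ ≤ q k := mul_le_of_le_one_right (hq k) ((hPf k (x k)).le_one (a k))

theorem sum_le_of_injective [∀ i, Fintype (X i)] {κ : Type} [Fintype κ]
    (h : IsCausal X A S P) (hS : 2 ≤ S.card) {m : ℕ} (hX : ∀ i ∈ S, Fintype.card (X i) ≤ m)
    (x : κ → (i : {j // j ∈ S}) → X i.1) (a : κ → (i : {j // j ∈ S}) → A i.1)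
    (hinj : ∀ k, Function.Injective fun j => (x j k, a j k)) :
    ∑ j, P (x j) (a j) ≤ m := by
  cases h with
  | base => simp at hS
  | step S _ _ q Pf Pr hq hq1 hPf hPr hPeq =>
    have hbranch : ∀ k, ∑ j, q k * Pf k (x j k) (a j k) *
        Pr k (x j k) (a j k) (restr (erase_sub S k.1) (x j)) (restr (erase_sub S k.1) (a j))
        ≤ q k * m := fun k =>
      calc _ ≤ ∑ j, q k * Pf k (x j k) (a j k) := sum_le_sum fun j _ =>
            mul_le_of_le_one_right (mul_nonneg (hq k) ((hPf k _).1 _)) ((hPr k _ _).le_one _ _)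
        _ = q k * ∑ j, Pf k (x j k) (a j k) := (mul_sum ..).symm
        _ ≤ q k * m := mul_le_mul_of_nonneg_left
            ((sum_le_card_of_injective (hPf k) _ (hinj k)).trans (by exact_mod_cast hX k k.2))
            (hq k)
    calc ∑ j, P (x j) (a j) = ∑ k ∈ S.attach, ∑ j, q k * Pf k (x j k) (a j k) *
          Pr k (x j k) (a j k) (restr (erase_sub S k.1) (x j))
            (restr (erase_sub S k.1) (a j)) := by simp only [hPeq]; exact sum_comm
      _ ≤ ∑ k ∈ S.attach, q k * m := sum_le_sum fun k _ => hbranch k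
      _ = m := by rw [← sum_mul, hq1, one_mul]

end IsCausal

/-- every causal tripartite correlation with binary inputs and outputs
satisfies the causal inequality `I_4 ≥ 0`, i.e.,
`2 - P(000|000) - P(011|110) - P(101|011) - P(110|101) ≥ 0`. -/
theorem causal_inequality_I4 (P : Corr3)
    (hP : IsCausal (fun _ : Fin 3 => Bool) (fun _ : Fin 3 => Bool) Finset.univ P) :
    0 ≤ 2 - P (t3 false false false) (t3 false false false)
      - P (t3 true true false) (t3 false true true)
      - P (t3 false true true) (t3 true false true)
      - P (t3 true false true) (t3 true true false) := by
  have h := hP.sum_le_of_injective (by decide) (m := 2) (fun _ _ => le_rfl)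
    ![t3 false false false, t3 true true false, t3 false true true, t3 true false true]
    ![t3 false false false, t3 false true true, t3 true false true, t3 true true false]
    (by decide)
  simp only [Fin.sum_univ_four, Matrix.cons_val, Nat.cast_ofNat] at h
  linarith
end

section
/- For every N ≥ 2 and every causal N-partite correlation P with binary inputs x_k ∈ {0,1} and binary outputs a_k ∈ {0,1} for each party, the generalized causal inequality J_1(N) ≥ 0 holds, where J_1(N) = Σ_{k=1}^N P_{N∖k}(1,…,1 | x_k = 0, x_{∖k} = (1,…,1)) − P(1,…,1 | 1,…,1), with P_{N∖k}(a_{∖k}|x) := Σ_{a_k} P(a|x) denoting the marginal distribution over the outputs of all parties except party k. -/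
/-!
Induct along the causal decomposition. In the branch where party `j` acts first, `j` sees the
same input and output in `P(1…1|1…1)` as in every term of `J_1` in which another party `k ≠ j`
switches its input, so `j`'s factor can be pulled out and the induction hypothesis applies to the
remaining parties. For a single party, a probability is at most its marginal, which is `1` for
every input.
-/

open Finset Function

namespace IsCausal

variable {ι : Type} [DecidableEq ι] {X A : ι → Type} [∀ i, Fintype (A i)]

theorem nonneg {S : Finset ι} {P : Corr X A S} (h : IsCausal X A S P) :
    ∀ x a, 0 ≤ P x a := by
  induction h with
  | base _ _ hP => exact fun x a => (hP x).1 a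
  | step _ _ _ _ _ _ hq _ hPf _ hP ih =>
    intro x a
    rw [hP]
    exact sum_nonneg fun k _ =>
      mul_nonneg (mul_nonneg (hq k) ((hPf k (x k)).1 (a k))) (ih k (x k) (a k) _ _)

def singletonUpdateEquiv (k : ι) (a₀ : ∀ i, A i) :
    A k ≃ ((i : {j // j ∈ ({k} : Finset ι)}) → A i.1) where
  toFun b i := update a₀ k b i.1
  invFun a := a ⟨k, mem_singleton_self k⟩
  left_inv b := update_self k b a₀
  right_inv a := by
    funext ⟨i, hi⟩
    obtain rfl := mem_singleton.1 hi
    exact update_self i _ a₀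

theorem le_sum_update_marginal {S : Finset ι} {P : Corr X A S} (h : IsCausal X A S P)
    (x₀ x₁ : ∀ i, X i) (a₀ : ∀ i, A i) :
    P (fun i => x₀ i.1) (fun i => a₀ i.1) ≤
      ∑ k ∈ S, ∑ b : A k, P (fun i => update x₀ k (x₁ k) i.1) (fun i => update a₀ k b i.1) := by
  induction h with
  | base k P hP =>
    let e := singletonUpdateEquiv k a₀
    calc P (fun i => x₀ i.1) (fun i => a₀ i.1)
        ≤ ∑ a, P (fun i => x₀ i.1) a := single_le_sum (fun a _ => (hP _).1 a) (mem_univ _)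
      _ = ∑ a, P (fun i => update x₀ k (x₁ k) i.1) a := by rw [(hP _).2, (hP _).2]
      _ = ∑ b : A k, P (fun i => update x₀ k (x₁ k) i.1) (e b) :=
        (Fintype.sum_equiv e _ _ fun _ => rfl).symm
      _ = _ := by rw [sum_singleton]; rfl
  | step S _ P q Pf Pr hq _ hPf hPr hP ih =>
    let term (j : {j // j ∈ S}) (x : ∀ i, X i) (a : ∀ i, A i) : ℝ :=
      q j * Pf j (x j) (a j) * Pr j (x j) (a j) (fun i => x i.1) (fun i => a i.1)
    have term_le (j : {j // j ∈ S}) : term j x₀ a₀ ≤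
        ∑ k ∈ S, ∑ b : A k, term j (update x₀ k (x₁ k)) (update a₀ k b) := by
      have hw : 0 ≤ q j * Pf j (x₀ j) (a₀ j) := mul_nonneg (hq j) ((hPf j _).1 _)
      calc term j x₀ a₀
          ≤ q j * Pf j (x₀ j) (a₀ j) * ∑ k ∈ S.erase j, ∑ b : A k, Pr j (x₀ j) (a₀ j)
              (fun i => update x₀ k (x₁ k) i.1) (fun i => update a₀ k b i.1) :=
            mul_le_mul_of_nonneg_left (ih j _ _) hw
        _ = ∑ k ∈ S.erase j, ∑ b : A k, term j (update x₀ k (x₁ k)) (update a₀ k b) := by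
          simp only [mul_sum]
          refine sum_congr rfl fun k hk => sum_congr rfl fun b _ => ?_
          have hjk : (j : ι) ≠ k := (ne_of_mem_erase hk).symm
          simp only [term, update_of_ne hjk]
        _ ≤ _ := sum_le_sum_of_subset_of_nonneg (erase_subset _ _) fun k _ _ =>
          sum_nonneg fun b _ => mul_nonneg (mul_nonneg (hq j) ((hPf j _).1 _))
            ((hPr j _ _).nonneg _ _)
    calc P (fun i => x₀ i.1) (fun i => a₀ i.1) = ∑ j ∈ S.attach, term j x₀ a₀ := hP _ _
      _ ≤ ∑ j ∈ S.attach, ∑ k ∈ S, ∑ b : A k, term j (update x₀ k (x₁ k)) (update a₀ k b) :=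
        sum_le_sum fun j _ => term_le j
      _ = ∑ k ∈ S, ∑ b : A k, ∑ j ∈ S.attach, term j (update x₀ k (x₁ k)) (update a₀ k b) := by
        rw [sum_comm]
        exact sum_congr rfl fun _ _ => sum_comm
      _ = _ := sum_congr rfl fun k _ => sum_congr rfl fun b _ => (hP _ _).symm

end IsCausal

theorem causal_inequality_J1_general (N : ℕ)
    (P : Corr (fun _ : Fin N => Bool) (fun _ : Fin N => Bool) Finset.univ)
    (hP : IsCausal (fun _ : Fin N => Bool) (fun _ : Fin N => Bool) Finset.univ P) :
    0 ≤ (∑ k : Fin N, ∑ ak : Bool,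
        P (fun i => if i.1 = k then false else true)
          (fun i => if i.1 = k then ak else true))
      - P (fun _ => true) (fun _ => true) :=
  sub_nonneg.2 <| by
    simpa only [update_apply] using
      hP.le_sum_update_marginal (fun _ => true) (fun _ => false) (fun _ => true)

/-- every causal `N`-partite correlation with binary inputs and outputs
satisfies the generalized causal inequality `J_1(N) ≥ 0`, i.e.,
`Σ_k P_{N∖k}(1,…,1 | x_k = 0, x_{∖k} = (1,…,1)) - P(1,…,1 | 1,…,1) ≥ 0`,
encoding `0` as `false` and `1` as `true`. -/
theorem causal_inequality_J1 (N : ℕ) (hN : 2 ≤ N)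
    (P : Corr (fun _ : Fin N => Bool) (fun _ : Fin N => Bool) Finset.univ)
    (hP : IsCausal (fun _ : Fin N => Bool) (fun _ : Fin N => Bool) Finset.univ P) :
    0 ≤ (∑ k : Fin N, ∑ ak : Bool,
        P (fun i => if i.1 = k then false else true)
          (fun i => if i.1 = k then ak else true))
      - P (fun _ => true) (fun _ => true) :=
  causal_inequality_J1_general N P hP
end
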